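/- arXiv:2406.02967 — 4 statements merged into one kernel-verified Lean document; each statement's English description precedes it below -/
import Mathlib

section
/- Let (A, B, H) be a P-module. A nonzero vector ξ ∈ H is said to be contained in an infinite binary sequence (ray) p if ‖pₙξ‖ = ‖ξ‖ for all n ∈ ℕ, where pₙ is the length-n prefix of p acting via A for digit 0 and B for digit 1 (first digit acting first). If ξ is contained in ray p and η is contained in ray q with p ≠ q, then ⟨ξ, η⟩ = 0. -/
open Filter Topology
open scoped InnerProductSpace

/-- Action of a finite binary word on a vector: digit `false` acts by `A`,
digit `true` by `B`, with the first digit acting first. -/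
noncomputable def wordAct {H : Type*} [NormedAddCommGroup H] [InnerProductSpace ℂ H]
    (A B : H →L[ℂ] H) : List Bool → H → H
  | [], ξ => ξ
  | b :: rest, ξ => wordAct A B rest ((if b then B else A) ξ)

/-- The length-`n` prefix of a ray `p : ℕ → Bool` as a list. -/
def pre (p : ℕ → Bool) (n : ℕ) : List Bool := List.ofFn fun i : Fin n => p i

/-- The Pythagorean equality `A*A + B*B = id`. -/
def IsPyth {H : Type*} [NormedAddCommGroup H] [InnerProductSpace ℂ H] [CompleteSpace H]
    (A B : H →L[ℂ] H) : Prop :=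
  (ContinuousLinearMap.adjoint A).comp A + (ContinuousLinearMap.adjoint B).comp B =
    ContinuousLinearMap.id ℂ H

/-- `ξ` is a nonzero vector contained in the ray `p`. -/
noncomputable def ContainedIn {H : Type*} [NormedAddCommGroup H] [InnerProductSpace ℂ H]
    (A B : H →L[ℂ] H) (p : ℕ → Bool) (ξ : H) : Prop :=
  ξ ≠ 0 ∧ ∀ n : ℕ, ‖wordAct A B (pre p n) ξ‖ = ‖ξ‖

lemma wordAct_append {H : Type*} [NormedAddCommGroup H] [InnerProductSpace ℂ H]
    (A B : H →L[ℂ] H) (w w' : List Bool) (ξ : H) :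
    wordAct A B (w ++ w') ξ = wordAct A B w' (wordAct A B w ξ) := by
  induction w generalizing ξ with
  | nil => rfl
  | cons b rest ih => simp [wordAct, ih]

lemma pre_succ (p : ℕ → Bool) (n : ℕ) : pre p (n+1) = pre p n ++ [p n] := by
  rw [pre, List.ofFn_succ']
  simp [pre, List.concat_eq_append]

lemma inner_expand {H : Type*} [NormedAddCommGroup H] [InnerProductSpace ℂ H]
    [CompleteSpace H] {A B : H →L[ℂ] H} (hAB : IsPyth A B) (ζ χ : H) :
    ⟪ζ, χ⟫_ℂ = ⟪A ζ, A χ⟫_ℂ + ⟪B ζ, B χ⟫_ℂ := by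
  have := congrArg (fun T : H →L[ℂ] H => ⟪ζ, T χ⟫_ℂ) hAB
  simpa [ContinuousLinearMap.add_apply, ContinuousLinearMap.comp_apply,
    ContinuousLinearMap.adjoint_inner_right, inner_add_right] using this.symm

lemma norm_expand {H : Type*} [NormedAddCommGroup H] [InnerProductSpace ℂ H]
    [CompleteSpace H] {A B : H →L[ℂ] H} (hAB : IsPyth A B) (ζ : H) :
    ‖ζ‖^2 = ‖A ζ‖^2 + ‖B ζ‖^2 := by
  have h := inner_expand hAB ζ ζ
  rw [inner_self_eq_norm_sq_to_K, inner_self_eq_norm_sq_to_K, inner_self_eq_norm_sq_to_K] at h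
  exact_mod_cast h

lemma killB {H : Type*} [NormedAddCommGroup H] [InnerProductSpace ℂ H]
    [CompleteSpace H] {A B : H →L[ℂ] H} (hAB : IsPyth A B) {ζ : H}
    (h : ‖A ζ‖ = ‖ζ‖) : B ζ = 0 := by
  have h2 := norm_expand hAB ζ
  rw [h] at h2
  have : ‖B ζ‖ ^ 2 = 0 := by linarith
  simpa [pow_eq_zero_iff] using this

lemma killA {H : Type*} [NormedAddCommGroup H] [InnerProductSpace ℂ H]
    [CompleteSpace H] {A B : H →L[ℂ] H} (hAB : IsPyth A B) {ζ : H}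
    (h : ‖B ζ‖ = ‖ζ‖) : A ζ = 0 := by
  have h2 := norm_expand hAB ζ
  rw [h] at h2
  have : ‖A ζ‖ ^ 2 = 0 := by linarith
  simpa [pow_eq_zero_iff] using this

lemma wordAct_step {H : Type*} [NormedAddCommGroup H] [InnerProductSpace ℂ H]
    (A B : H →L[ℂ] H) (p : ℕ → Bool) (k : ℕ) (ξ : H) :
    wordAct A B (pre p (k+1)) ξ = (if p k then B else A) (wordAct A B (pre p k) ξ) := by
  rw [pre_succ, wordAct_append]
  rfl

lemma contained_killA {H : Type*} [NormedAddCommGroup H] [InnerProductSpace ℂ H]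
    [CompleteSpace H] {A B : H →L[ℂ] H} (hAB : IsPyth A B) {p : ℕ → Bool} {ξ : H}
    (hξ : ContainedIn A B p ξ) (k : ℕ) (hk : p k = true) :
    A (wordAct A B (pre p k) ξ) = 0 := by
  apply killA hAB
  have h1 := hξ.2 (k+1)
  rw [wordAct_step, hk, if_pos rfl] at h1
  rw [h1, hξ.2 k]

lemma contained_killB {H : Type*} [NormedAddCommGroup H] [InnerProductSpace ℂ H]
    [CompleteSpace H] {A B : H →L[ℂ] H} (hAB : IsPyth A B) {p : ℕ → Bool} {ξ : H}
    (hξ : ContainedIn A B p ξ) (k : ℕ) (hk : p k = false) :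
    B (wordAct A B (pre p k) ξ) = 0 := by
  apply killB hAB
  have h1 := hξ.2 (k+1)
  rw [wordAct_step, hk] at h1
  simp only [Bool.false_eq_true, if_false] at h1
  rw [h1, hξ.2 k]

theorem stmt4 {H : Type*} [NormedAddCommGroup H] [InnerProductSpace ℂ H]
    [CompleteSpace H] (A B : H →L[ℂ] H) (hAB : IsPyth A B)
    (p q : ℕ → Bool) (ξ η : H)
    (hξ : ContainedIn A B p ξ) (hη : ContainedIn A B q η) (hpq : p ≠ q) :
    ⟪ξ, η⟫_ℂ = 0 := by
  have hne : ∃ m, p m ≠ q m := by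
    by_contra h
    push_neg at h
    exact hpq (funext h)
  set n := Nat.find hne with hn_def
  have hn : p n ≠ q n := Nat.find_spec hne
  have hlt : ∀ k, k < n → p k = q k := fun k hk => not_not.mp (Nat.find_min hne hk)
  have key : ∀ k, k ≤ n →
      ⟪wordAct A B (pre p k) ξ, wordAct A B (pre q k) η⟫_ℂ = ⟪ξ, η⟫_ℂ := by
    intro k
    induction k with
    | zero => intro _; simp [pre, wordAct]
    | succ k ih =>
      intro hk
      have hk' : k < n := hk
      have hkq : p k = q k := hlt k hk'
      rw [← ih hk'.le, inner_expand hAB (wordAct A B (pre p k) ξ) (wordAct A B (pre q k) η),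
        wordAct_step, wordAct_step, ← hkq]
      cases hpk : p k with
      | false =>
        rw [contained_killB hAB hξ k hpk, contained_killB hAB hη k (hkq ▸ hpk)]
        simp
      | true =>
        rw [contained_killA hAB hξ k hpk, contained_killA hAB hη k (hkq ▸ hpk)]
        simp
  rw [← key n le_rfl, inner_expand hAB]
  cases hpn : p n with
  | false =>
    have hqn : q n = true := by
      cases hq : q n
      · exact absurd (hpn.trans hq.symm) hn
      · rfl
    rw [contained_killB hAB hξ n hpn, contained_killA hAB hη n hqn]
    simp
  | true =>
    have hqn : q n = false := by
      cases hq : q n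
      · rfl
      · exact absurd (hpn.trans hq.symm) hn
    rw [contained_killA hAB hξ n hpn, contained_killB hAB hη n hqn]
    simp
end

section
/- Let (A, B, H) be a P-module. Define H_diff to be the set of ξ ∈ H such that lim_{n→∞} ‖qₙξ‖ = 0 for all rays q. Then H_diff is a linear subspace of H invariant under both A and B. -/
open Filter Topology
open scoped InnerProductSpace

section Aux
variable {H : Type*} [NormedAddCommGroup H] [InnerProductSpace ℂ H] (A B : H →L[ℂ] H)

lemma wordAct_add (w : List Bool) (ξ η : H) :
    wordAct A B w (ξ + η) = wordAct A B w ξ + wordAct A B w η := by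
  induction w generalizing ξ η with
  | nil => rfl
  | cons b rest ih => simp [wordAct, map_add, ih]

lemma wordAct_smul (w : List Bool) (c : ℂ) (ξ : H) :
    wordAct A B w (c • ξ) = c • wordAct A B w ξ := by
  induction w generalizing ξ with
  | nil => rfl
  | cons b rest ih => simp [wordAct, map_smul, ih]

lemma wordAct_zero (w : List Bool) : wordAct A B w (0 : H) = 0 := by
  induction w with
  | nil => rfl
  | cons b rest ih => simp [wordAct, ih]

lemma pre_cons (b : Bool) (q : ℕ → Bool) (n : ℕ) :
    pre (fun k => Nat.rec b (fun m _ => q m) k) (n + 1) = b :: pre q n := by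
  simp [pre, List.ofFn_succ]

end Aux

theorem stmt8 {H : Type*} [NormedAddCommGroup H] [InnerProductSpace ℂ H]
    [CompleteSpace H] (A B : H →L[ℂ] H) (hAB : IsPyth A B) :
    ∃ S : Submodule ℂ H,
      (S : Set H) = {ξ : H | ∀ q : ℕ → Bool,
        Tendsto (fun n : ℕ => ‖wordAct A B (pre q n) ξ‖) atTop (𝓝 0)} ∧
      ∀ ξ ∈ S, A ξ ∈ S ∧ B ξ ∈ S := by
  refine ⟨⟨⟨⟨{ξ : H | ∀ q : ℕ → Bool,
        Tendsto (fun n : ℕ => ‖wordAct A B (pre q n) ξ‖) atTop (𝓝 0)},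
    ?_⟩, ?_⟩, ?_⟩, rfl, ?_⟩
  · intro ξ η hξ hη q
    have h := (hξ q).add (hη q)
    rw [add_zero] at h
    refine squeeze_zero (fun n => norm_nonneg _) (fun n => ?_) h
    rw [wordAct_add]; exact norm_add_le _ _
  · intro q
    simp [wordAct_zero]
  · intro c ξ hξ q
    have h := (hξ q).const_mul ‖c‖
    rw [mul_zero] at h
    simpa [wordAct_smul, norm_smul] using h
  · intro ξ hξ
    have key : ∀ b : Bool, ∀ q : ℕ → Bool,
        Tendsto (fun n : ℕ => ‖wordAct A B (pre q n) ((if b then B else A) ξ)‖) atTop (𝓝 0) := by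
      intro b q
      have h := hξ (fun k => Nat.rec b (fun m _ => q m) k)
      have h2 := h.comp (tendsto_add_atTop_nat 1)
      refine h2.congr fun n => ?_
      simp only [Function.comp, pre_cons, wordAct]
    exact ⟨fun q => by simpa using key false q, fun q => by simpa using key true q⟩
end

section
/- Fix a prime binary word w of length d and φ ∈ S¹, and let m_{w,φ} = (A_w D_φ, B_w D_φ, ℂ^d) be the associated atomic P-module. Then m_{w,φ} is irreducible: the only subspaces of ℂ^d invariant under both A_w D_φ and B_w D_φ are {0} and ℂ^d. -/
open Filter Topology
open scoped InnerProductSpace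

/-- The partial shift matrix `A_w`: `A_w e_n = e_{n+1 mod d}` if the `n`-th digit of
`w` is `0` (i.e. `false`), else `A_w e_n = 0`. -/
def Aw (d : ℕ) (w : Fin d → Bool) : Matrix (Fin d) (Fin d) ℂ :=
  fun i j => if w j = false ∧ (i : ℕ) = ((j : ℕ) + 1) % d then 1 else 0

/-- The partial shift matrix `B_w`: `B_w e_n = e_{n+1 mod d}` if the `n`-th digit of
`w` is `1` (i.e. `true`), else `B_w e_n = 0`. -/
def Bw (d : ℕ) (w : Fin d → Bool) : Matrix (Fin d) (Fin d) ℂ :=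
  fun i j => if w j = true ∧ (i : ℕ) = ((j : ℕ) + 1) % d then 1 else 0

/-- The diagonal matrix `diag(1, …, 1, φ)`. -/
def Dmat (d : ℕ) (φ : ℂ) : Matrix (Fin d) (Fin d) ℂ :=
  Matrix.diagonal fun i => if (i : ℕ) = d - 1 then φ else 1

/-- A binary word `w` of length `d` is prime iff it is not a proper power, i.e. it is
not invariant under the cyclic shift by `k` for any proper divisor `k` of `d`. -/
def IsPrimeWord (d : ℕ) (w : Fin d → Bool) : Prop :=
  ∀ k : ℕ, 0 < k → k < d → k ∣ d →
    ¬ ∀ i : Fin d, w ⟨((i : ℕ) + k) % d, Nat.mod_lt _ i.pos⟩ = w i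

/-- The periodic ray `w^∞` obtained by repeating the word `w` of length `d`. -/
def rayOfWord (d : ℕ) (hd : 0 < d) (w : Fin d → Bool) : ℕ → Bool :=
  fun n => w ⟨n % d, Nat.mod_lt _ hd⟩

/-- Action of a finite binary word on `ℂ^d` via the matrices `A` (digit `false`) and
`B` (digit `true`), the first digit acting first. -/
noncomputable def matAct {d : ℕ} (A B : Matrix (Fin d) (Fin d) ℂ) :
    List Bool → EuclideanSpace ℂ (Fin d) → EuclideanSpace ℂ (Fin d)
  | [], ξ => ξ
  | b :: rest, ξ => matAct A B rest (Matrix.toEuclideanLin (if b then B else A) ξ)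

/-!
Write `c` for the diagonal of `D_φ` and `T = A_w D_φ + B_w D_φ`, the invertible weighted cyclic
shift `e_j ↦ c_j e_{j+1}`. Then `A_w D_φ = T P_0` and `B_w D_φ = T P_1`, where `P_b` projects onto
the coordinates at which `w` has digit `b`. An invariant subspace is thus invariant under
`P_b = T⁻¹ (T P_b)` and under the conjugates `T^k P_b T^{-k}`, which project onto the coordinates
`j` with `w (j - k) = b`. As `w` is not a proper power, two coordinates with the same digit history
`k ↦ w (j - k)` coincide, so products of these projections give every coordinate projection.
Hence a nonzero invariant subspace contains some `e_i`, and by applying `T`, all of them.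
-/

open Matrix

namespace Submodule

variable {K n : Type*} [Field K] [Fintype n] [DecidableEq n] (p : ENNReal)

def matrixStabilizer (S : Submodule K (WithLp p (n → K))) : Subalgebra K (Matrix n n K) where
  carrier := {M | ∀ x ∈ S, toLpLin p p M x ∈ S}
  mul_mem' hM hN x hx := by simpa using hM _ (hN x hx)
  add_mem' hM hN x hx := by simpa using S.add_mem (hM x hx) (hN x hx)
  algebraMap_mem' a x hx := by simpa [Algebra.algebraMap_eq_smul_one] using S.smul_mem a hx

variable {p} {S : Submodule K (WithLp p (n → K))}

theorem mem_of_injective_of_apply_mem {V : Type*} [AddCommGroup V] [Module K V]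
    {T : Submodule K V} [FiniteDimensional K T] {f : V →ₗ[K] V} (hf : Function.Injective f)
    (hT : ∀ x ∈ T, f x ∈ T) {x : V} (hx : f x ∈ T) : x ∈ T := by
  have hsurj : Function.Surjective (f.restrict hT) :=
    LinearMap.injective_iff_surjective.mp fun a b hab => Subtype.ext (hf congr($hab.1))
  obtain ⟨y, hy⟩ := hsurj ⟨f x, hx⟩
  rw [← hf congr($hy.1)]
  exact y.2

theorem nonsing_inv_mem_matrixStabilizer {M : Matrix n n K} (hM : M ∈ S.matrixStabilizer p)
    (hunit : IsUnit M) : M⁻¹ ∈ S.matrixStabilizer p := by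
  have hdet : IsUnit M.det := (isUnit_iff_isUnit_det M).mp hunit
  intro x hx
  refine mem_of_injective_of_apply_mem (f := toLpLin p p M) ?_ hM ?_
  · exact ((Module.End.isUnit_iff _).mp (hunit.map (toLpLinAlgEquiv p))).injective
  · simpa [← LinearMap.comp_apply, ← toLpLin_mul_same, mul_nonsing_inv _ hdet] using hx

theorem eq_top_of_forall_single_mem (h : ∀ i, PiLp.single p i (1 : K) ∈ S) : S = ⊤ := by
  rw [eq_top_iff, ← (PiLp.basisFun p K n).span_eq, span_le]
  rintro _ ⟨i, rfl⟩
  simpa using h i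

theorem exists_single_mem_of_diagonal_single_mem (hS : S ≠ ⊥)
    (h : ∀ i, diagonal (Pi.single i 1) ∈ S.matrixStabilizer p) :
    ∃ i, PiLp.single p i (1 : K) ∈ S := by
  obtain ⟨x, hxS, hx0⟩ := (Submodule.ne_bot_iff S).mp hS
  obtain ⟨i, hi⟩ : ∃ i, x i ≠ 0 := by
    by_contra! hx
    exact hx0 (PiLp.ext hx)
  refine ⟨i, ?_⟩
  have hproj : toLpLin p p (diagonal (Pi.single i 1)) x = x i • PiLp.single p i (1 : K) := by
    ext j
    by_cases hj : j = i <;> simp [toLpLin_apply, mulVec_diagonal, hj]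
  have := S.smul_mem (x i)⁻¹ (h i x hxS)
  rwa [hproj, smul_smul, inv_mul_cancel₀ hi, one_smul] at this

end Submodule

namespace Matrix

open scoped Fin.CommRing

variable {K : Type*} {d : ℕ} [NeZero d]

def weightedShift [Zero K] (c : Fin d → K) : Matrix (Fin d) (Fin d) K :=
  of fun i j => if i = j + 1 then c j else 0

section Semiring

variable [Semiring K] (c : Fin d → K)

theorem weightedShift_mul_diagonal (f : Fin d → K) :
    weightedShift c * diagonal f = weightedShift (c * f) := by
  ext i j
  by_cases h : i = j + 1 <;> simp [weightedShift, mul_diagonal, h]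

theorem diagonal_mul_weightedShift (f : Fin d → K) :
    diagonal f * weightedShift c = weightedShift fun j => f (j + 1) * c j := by
  ext i j
  by_cases h : i = j + 1 <;> simp [weightedShift, diagonal_mul, h]

theorem weightedShift_mulVec (v : Fin d → K) (i : Fin d) :
    (weightedShift c *ᵥ v) i = c (i - 1) * v (i - 1) := by
  simp [weightedShift, mulVec, dotProduct, ← sub_eq_iff_eq_add, eq_comm (a := i - 1)]

theorem weightedShift_mulVec_single (j : Fin d) (a : K) :
    weightedShift c *ᵥ Pi.single j a = Pi.single (j + 1) (c j * a) := by
  ext i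
  by_cases h : i = j + 1 <;> simp [weightedShift_mulVec, h, sub_eq_iff_eq_add]

end Semiring

section Field

variable [Field K]

theorem isUnit_weightedShift {c : Fin d → K} (hc : ∀ j, c j ≠ 0) :
    IsUnit (weightedShift c) := by
  refine mulVec_injective_iff_isUnit.mp fun u v huv => funext fun j => ?_
  have := congrFun huv (j + 1)
  simpa [weightedShift_mulVec, hc j] using this

theorem weightedShift_mul_diagonal_mul_inv {c : Fin d → K} (hc : ∀ j, c j ≠ 0) (f : Fin d → K) :
    weightedShift c * diagonal f * (weightedShift c)⁻¹ = diagonal fun i => f (i - 1) := by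
  have hdet := (isUnit_iff_isUnit_det _).mp (isUnit_weightedShift hc)
  calc weightedShift c * diagonal f * (weightedShift c)⁻¹
      = diagonal (fun i => f (i - 1)) * weightedShift c * (weightedShift c)⁻¹ := by
        rw [diagonal_mul_weightedShift, weightedShift_mul_diagonal]
        simp only [add_sub_cancel_right, mul_comm]
        rfl
    _ = diagonal fun i => f (i - 1) := by rw [mul_assoc, mul_nonsing_inv _ hdet, mul_one]

end Field

end Matrix

namespace IsPrimeWord

open scoped Fin.CommRing

variable {d : ℕ} [NeZero d] {w : Fin d → Bool}

theorem eq_zero_of_forall_add_eq (hw : IsPrimeWord d w) {s : Fin d}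
    (hs : ∀ i, w (i + s) = w i) : s = 0 := by
  have hmul : ∀ (m : ℕ) i, w (i + m * s) = w i := by
    intro m
    induction m with
    | zero => simp
    | succ m ih =>
      intro i
      rw [Nat.cast_succ, add_one_mul, ← add_assoc, hs, ih]
  by_contra hs0
  have hpos : 0 < (s : ℕ) := Fin.pos_iff_ne_zero.mpr hs0
  set k := Nat.gcd s d
  have hkd : k < d := (Nat.gcd_le_left d hpos).trans_lt s.isLt
  -- `k ≡ s * m (mod d)` for some `m`, so `k` is a period of `w` as well.
  obtain ⟨m, -, hm⟩ := Nat.exists_mul_mod_eq_gcd hkd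
  have hk : (k : Fin d) = m * s := by
    rw [show k = s * m % d from hm.symm, mul_comm]
    ext
    simp [Fin.val_natCast, Fin.val_mul]
  refine hw k (Nat.gcd_pos_of_pos_left d hpos) hkd (Nat.gcd_dvd_right _ _) fun i => ?_
  convert hmul m i using 2
  ext
  simp [← hk, Fin.val_add, Fin.val_natCast]

theorem eq_of_forall_sub_eq (hw : IsPrimeWord d w) {i j : Fin d}
    (h : ∀ k, w (j - k) = w (i - k)) : j = i :=
  sub_eq_zero.mp <| hw.eq_zero_of_forall_add_eq fun x => by
    simpa [show j - (i - x) = x + (j - i) by ring] using h (i - x)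

theorem pi_single_eq_prod {K : Type*} [CommRing K] (hw : IsPrimeWord d w) (i : Fin d) :
    (Pi.single i 1 : Fin d → K) = ∏ k, fun j => if w (j - k) = w (i - k) then 1 else 0 := by
  ext j
  rw [Finset.prod_apply]
  by_cases hj : j = i
  · simp [hj]
  · obtain ⟨k, hk⟩ : ∃ k, w (j - k) ≠ w (i - k) := by
      by_contra! h
      exact hj (hw.eq_of_forall_sub_eq h)
    rw [Pi.single_eq_of_ne hj, Finset.prod_eq_zero (Finset.mem_univ k) (if_neg hk)]

end IsPrimeWord

namespace Submodule

open scoped Fin.CommRing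

variable {K : Type*} [Field K] {d : ℕ} [NeZero d] {p : ENNReal}
  {S : Submodule K (WithLp p (Fin d → K))} {c : Fin d → K}

theorem diagonal_sub_mem_matrixStabilizer (hc : ∀ j, c j ≠ 0)
    (hW : weightedShift c ∈ S.matrixStabilizer p) {f : Fin d → K}
    (hf : diagonal f ∈ S.matrixStabilizer p) (k : Fin d) :
    (diagonal fun i => f (i - k)) ∈ S.matrixStabilizer p := by
  have hWinv := nonsing_inv_mem_matrixStabilizer hW (isUnit_weightedShift hc)
  suffices ∀ n : ℕ, (diagonal fun i => f (i - n)) ∈ S.matrixStabilizer p by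
    simpa using this k
  intro n
  induction n with
  | zero => simpa using hf
  | succ n ih =>
    have hconj := weightedShift_mul_diagonal_mul_inv hc fun i => f (i - n)
    simp only [sub_sub, add_comm (1 : Fin d), ← Nat.cast_succ] at hconj
    exact hconj ▸ mul_mem (mul_mem hW ih) hWinv

theorem single_mem_of_weightedShift_mem (hc : ∀ j, c j ≠ 0)
    (hW : weightedShift c ∈ S.matrixStabilizer p) {i : Fin d} (hi : PiLp.single p i (1 : K) ∈ S)
    (j : Fin d) : PiLp.single p j (1 : K) ∈ S := by
  suffices ∀ n : ℕ, PiLp.single p (i + n) (1 : K) ∈ S by simpa using this (j - i : Fin d)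
  intro n
  induction n with
  | zero => simpa using hi
  | succ n ih =>
    have hstep : toLpLin p p (weightedShift c) (PiLp.single p (i + n) 1) =
        c (i + n) • PiLp.single p (i + (n + 1 : ℕ)) (1 : K) := by
      ext j
      simp [toLpLin_apply, -mulVec_single, weightedShift_mulVec_single, Pi.single_apply, add_assoc]
    have := S.smul_mem (c (i + n))⁻¹ (hW _ ih)
    rwa [hstep, smul_smul, inv_mul_cancel₀ (hc _), one_smul] at this

theorem eq_bot_or_eq_top_of_digitShift_mem {w : Fin d → Bool} (hw : IsPrimeWord d w)
    (hc : ∀ j, c j ≠ 0)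
    (hmem : ∀ b, weightedShift c * diagonal (fun j => if w j = b then 1 else 0) ∈
      S.matrixStabilizer p) :
    S = ⊥ ∨ S = ⊤ := by
  set A := S.matrixStabilizer p
  have hW : weightedShift c ∈ A := by
    have hsum : (diagonal fun j => if w j = false then 1 else 0) +
        (diagonal fun j => if w j = true then (1 : K) else 0) = 1 := by
      rw [diagonal_add, ← diagonal_one]
      congr 1
      funext j
      cases w j <;> simp
    simpa [← mul_add, hsum] using A.add_mem (hmem false) (hmem true)
  have hdigit : ∀ b, (diagonal fun j => if w j = b then 1 else 0) ∈ A := fun b => by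
    have hdet := (isUnit_iff_isUnit_det _).mp (isUnit_weightedShift hc)
    simpa [← mul_assoc, nonsing_inv_mul _ hdet] using
      A.mul_mem (nonsing_inv_mem_matrixStabilizer hW (isUnit_weightedShift hc)) (hmem b)
  have hsingle : ∀ i, diagonal (Pi.single i 1) ∈ A := fun i => by
    change Pi.single i 1 ∈ A.comap (diagonalAlgHom K)
    rw [hw.pi_single_eq_prod i]
    exact Subalgebra.prod_mem _ fun k _ => diagonal_sub_mem_matrixStabilizer hc hW (hdigit _) k
  refine or_iff_not_imp_left.mpr fun hS => ?_
  obtain ⟨i, hi⟩ := exists_single_mem_of_diagonal_single_mem hS hsingle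
  exact eq_top_of_forall_single_mem (single_mem_of_weightedShift_mem hc hW hi)

end Submodule

section PartialShift

open scoped Fin.CommRing

variable {d : ℕ} [NeZero d] (w : Fin d → Bool) (φ : ℂ)

theorem Aw_eq_weightedShift : Aw d w = weightedShift fun j => if w j = false then 1 else 0 := by
  ext i j
  have hij : (i : ℕ) = (j + 1) % d ↔ i = j + 1 := by simp [Fin.ext_iff, Fin.val_add]
  simp only [Aw, weightedShift, of_apply, hij]
  by_cases h : i = j + 1 <;> simp [h]

theorem Bw_eq_weightedShift : Bw d w = weightedShift fun j => if w j = true then 1 else 0 := by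
  ext i j
  have hij : (i : ℕ) = (j + 1) % d ↔ i = j + 1 := by simp [Fin.ext_iff, Fin.val_add]
  simp only [Bw, weightedShift, of_apply, hij]
  by_cases h : i = j + 1 <;> simp [h]

theorem Aw_mul_Dmat :
    Aw d w * Dmat d φ = weightedShift (fun j => if (j : ℕ) = d - 1 then φ else 1) *
      diagonal fun j => if w j = false then 1 else 0 := by
  rw [Aw_eq_weightedShift, Dmat, weightedShift_mul_diagonal, weightedShift_mul_diagonal, mul_comm]

theorem Bw_mul_Dmat :
    Bw d w * Dmat d φ = weightedShift (fun j => if (j : ℕ) = d - 1 then φ else 1) *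
      diagonal fun j => if w j = true then 1 else 0 := by
  rw [Bw_eq_weightedShift, Dmat, weightedShift_mul_diagonal, weightedShift_mul_diagonal, mul_comm]

end PartialShift

theorem stmt12 (d : ℕ) (hd : 0 < d) (w : Fin d → Bool) (hw : IsPrimeWord d w)
    (φ : ℂ) (hφ : ‖φ‖ = 1) (S : Submodule ℂ (EuclideanSpace ℂ (Fin d)))
    (hA : ∀ x ∈ S, Matrix.toEuclideanLin (Aw d w * Dmat d φ) x ∈ S)
    (hB : ∀ x ∈ S, Matrix.toEuclideanLin (Bw d w * Dmat d φ) x ∈ S) :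
    S = ⊥ ∨ S = ⊤ := by
  have : NeZero d := ⟨hd.ne'⟩
  have hφ0 : φ ≠ 0 := by
    rintro rfl
    simp at hφ
  refine Submodule.eq_bot_or_eq_top_of_digitShift_mem hw
    (c := fun j => if (j : ℕ) = d - 1 then φ else 1) (fun j => by split <;> simp [hφ0]) ?_
  rintro (_ | _)
  · rw [← Aw_mul_Dmat]
    exact hA
  · rw [← Bw_mul_Dmat]
    exact hB
end

section
/- Let w, w̃ be prime binary words of lengths d, d̃ and φ, φ̃ ∈ S¹. If there is a unitary U : ℂ^d → ℂ^{d̃} with U(A_w D_φ) = (A_{w̃} D_{φ̃})U and U(B_w D_φ) = (B_{w̃} D_{φ̃})U, then d = d̃, w̃ is a cyclic permutation of w, and φ = φ̃. -/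
open Filter Topology
open scoped InnerProductSpace

/-! The phase is a unitary invariant: `A_w D_φ + B_w D_φ = P D_φ` for the cyclic permutation
matrix `P`, independently of `w`, so its determinant `sign(P) φ` is preserved by the
intertwiner. For the word, apply the letters of a list `l` to a basis vector `e_j`: the result
is a nonzero multiple of `e_{j + |l|}` exactly when `l` is read in `w` cyclically from `j`,
and `0` otherwise. As `w` is read in itself from `0`, the image of `e_0` under the intertwiner
survives the action of `w`, so some `e_j` does for `w̃`: `w` is read in `w̃` cyclically from
`j`, i.e. it is a rotation of `w̃`. -/

open Matrix Fin.NatCast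

lemma Fin.eq_add_one_iff_val_eq_mod {d : ℕ} [NeZero d] (i j : Fin d) :
    i = j + 1 ↔ (i : ℕ) = ((j : ℕ) + 1) % d := by
  rw [Fin.ext_iff, Fin.val_add, Fin.val_one', Nat.add_mod_mod]

lemma det_eq_of_intertwines {ι ι' : Type*} [Fintype ι] [DecidableEq ι] [Fintype ι']
    [DecidableEq ι'] (U : EuclideanSpace ℂ ι ≃ₗ[ℂ] EuclideanSpace ℂ ι')
    {M : Matrix ι ι ℂ} {M' : Matrix ι' ι' ℂ}
    (h : ∀ x, U (toEuclideanLin M x) = toEuclideanLin M' (U x)) : M.det = M'.det := by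
  have hconj : toEuclideanLin M' = (U : _ →ₗ[ℂ] _) ∘ₗ toEuclideanLin M ∘ₗ U.symm :=
    LinearMap.ext fun x => by simp [h]
  rw [← LinearMap.det_toLpLin 2 M, ← LinearMap.det_toLpLin 2 M']
  exact (LinearMap.det_conj _ U).symm.trans (congrArg LinearMap.det hconj.symm)

lemma Aw_add_Bw {d : ℕ} (w : Fin d → Bool) :
    Aw d w + Bw d w = Equiv.Perm.permMatrix ℂ (finRotate d).symm := by
  ext i j
  have : NeZero d := NeZero.of_pos i.pos
  have hshift : (finRotate d).symm i = j ↔ (i : ℕ) = ((j : ℕ) + 1) % d := by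
    rw [Equiv.symm_apply_eq, finRotate_apply, Fin.eq_add_one_iff_val_eq_mod]
  simp only [Matrix.add_apply, Aw, Bw, PEquiv.toMatrix_apply, Equiv.toPEquiv_apply,
    Option.mem_def, Option.some.injEq, hshift]
  cases w j <;> simp

section Phase

variable {d : ℕ} [NeZero d]

lemma det_Dmat (φ : ℂ) : (Dmat d φ).det = φ := by
  have hd := NeZero.pos d
  have : (fun i : Fin d => if (i : ℕ) = d - 1 then φ else 1) =
      fun i => if i = ⟨d - 1, by omega⟩ then φ else 1 := by
    ext i; simp [Fin.ext_iff]
  rw [Dmat, det_diagonal, this, Finset.prod_ite_eq' Finset.univ]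
  simp

lemma phase_eq_of_intertwines {w w' : Fin d → Bool} {φ φ' : ℂ}
    (U : EuclideanSpace ℂ (Fin d) ≃ₗ[ℂ] EuclideanSpace ℂ (Fin d))
    (hUA : ∀ x, U (toEuclideanLin (Aw d w * Dmat d φ) x) =
      toEuclideanLin (Aw d w' * Dmat d φ') (U x))
    (hUB : ∀ x, U (toEuclideanLin (Bw d w * Dmat d φ) x) =
      toEuclideanLin (Bw d w' * Dmat d φ') (U x)) :
    φ = φ' := by
  have hdet := det_eq_of_intertwines U (M := (Aw d w + Bw d w) * Dmat d φ)
    (M' := (Aw d w' + Bw d w') * Dmat d φ') fun x => by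
      rw [add_mul, add_mul, map_add, map_add, LinearMap.add_apply, LinearMap.add_apply, map_add,
        hUA, hUB]
  rw [det_mul, det_mul, Aw_add_Bw, Aw_add_Bw, det_Dmat, det_Dmat] at hdet
  exact mul_left_cancel₀ (by simp) hdet

end Phase

section WordAction

variable {d : ℕ}

lemma matAct_add (A B : Matrix (Fin d) (Fin d) ℂ) (l : List Bool)
    (x y : EuclideanSpace ℂ (Fin d)) : matAct A B l (x + y) = matAct A B l x + matAct A B l y := by
  induction l generalizing x y <;> simp [matAct, *]

lemma matAct_smul (A B : Matrix (Fin d) (Fin d) ℂ) (l : List Bool) (c : ℂ)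
    (x : EuclideanSpace ℂ (Fin d)) : matAct A B l (c • x) = c • matAct A B l x := by
  induction l generalizing x <;> simp [matAct, *]

noncomputable def matActLinear (A B : Matrix (Fin d) (Fin d) ℂ) (l : List Bool) :
    EuclideanSpace ℂ (Fin d) →ₗ[ℂ] EuclideanSpace ℂ (Fin d) where
  toFun := matAct A B l
  map_add' := matAct_add A B l
  map_smul' := matAct_smul A B l

lemma exists_matAct_single_ne_zero {A B : Matrix (Fin d) (Fin d) ℂ} {l : List Bool}
    {x : EuclideanSpace ℂ (Fin d)} (hx : matAct A B l x ≠ 0) :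
    ∃ j, matAct A B l (EuclideanSpace.single j 1) ≠ 0 := by
  by_contra! h
  have : matActLinear A B l = 0 :=
    (EuclideanSpace.basisFun (Fin d) ℂ).toBasis.ext fun j => by simpa [matActLinear] using h j
  exact hx (LinearMap.congr_fun this x)

lemma map_matAct {d' : ℕ} {A B : Matrix (Fin d) (Fin d) ℂ} {A' B' : Matrix (Fin d') (Fin d') ℂ}
    (U : EuclideanSpace ℂ (Fin d) → EuclideanSpace ℂ (Fin d'))
    (hA : ∀ x, U (toEuclideanLin A x) = toEuclideanLin A' (U x))
    (hB : ∀ x, U (toEuclideanLin B x) = toEuclideanLin B' (U x)) (l : List Bool)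
    (x : EuclideanSpace ℂ (Fin d)) : U (matAct A B l x) = matAct A' B' l (U x) := by
  induction l generalizing x with
  | nil => rfl
  | cons b l ih => cases b <;> simp [matAct, ih, hA, hB]

end WordAction

section CyclicRead

variable {α : Type*} {d : ℕ} [NeZero d]

def cyclicRead (w : Fin d → α) (j : Fin d) (n : ℕ) : List α :=
  List.ofFn fun t : Fin n => w (j + ((t : ℕ) : Fin d))

lemma cyclicRead_succ (w : Fin d → α) (j : Fin d) (n : ℕ) :
    cyclicRead w j (n + 1) = w j :: cyclicRead w (j + 1) n := by
  simp [cyclicRead, List.ofFn_succ, add_assoc, add_comm (1 : Fin d)]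

lemma cyclicRead_eq_rotate (w : Fin d → α) (j : Fin d) :
    cyclicRead w j d = (List.ofFn w).rotate j := by
  apply List.ext_getElem (by simp [cyclicRead])
  intro t h _
  simp only [cyclicRead, List.getElem_ofFn, List.getElem_rotate, List.length_ofFn]
  congr 1
  ext
  simp [Fin.val_add, Nat.add_comm]

end CyclicRead

section Intertwining

variable {d : ℕ} [NeZero d]

lemma toEuclideanLin_letter_single (w : Fin d → Bool) (φ : ℂ) (b : Bool) (j : Fin d) :
    toEuclideanLin (if b then Bw d w * Dmat d φ else Aw d w * Dmat d φ)
        (EuclideanSpace.single j 1) =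
      if w j = b then Dmat d φ j j • EuclideanSpace.single (j + 1) 1 else 0 := by
  ext i
  simp only [toLpLin_apply, PiLp.ofLp_single, mulVec_single_one]
  cases b <;> cases hw : w j <;>
    simp [Aw, Bw, Dmat, mul_diagonal, hw] <;>
    split_ifs <;> simp_all [PiLp.single_apply, Fin.eq_add_one_iff_val_eq_mod]

lemma matAct_single (w : Fin d → Bool) {φ : ℂ} (hφ : φ ≠ 0) (l : List Bool) (j : Fin d) :
    ∃ c : ℂ, matAct (Aw d w * Dmat d φ) (Bw d w * Dmat d φ) l (EuclideanSpace.single j 1) =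
        c • EuclideanSpace.single (j + (l.length : Fin d)) 1 ∧
      (c ≠ 0 ↔ cyclicRead w j l.length = l) := by
  induction l generalizing j with
  | nil => exact ⟨1, by simp [matAct], by simp [cyclicRead]⟩
  | cons b l ih =>
    have hDmat : Dmat d φ j j ≠ 0 := by
      rw [Dmat, diagonal_apply_eq]; split_ifs <;> simp [hφ]
    rw [List.length_cons, cyclicRead_succ, List.cons_eq_cons]
    simp only [matAct, toEuclideanLin_letter_single]
    by_cases hb : w j = b
    · obtain ⟨c, hc, hiff⟩ := ih (j + 1)
      refine ⟨Dmat d φ j j * c, ?_, ?_⟩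
      · rw [if_pos hb, matAct_smul, hc, smul_smul, Nat.cast_succ, add_right_comm, add_assoc]
      · rw [mul_ne_zero_iff, hiff]
        simp [hDmat, hb]
    · refine ⟨0, ?_, by simp [hb]⟩
      rw [if_neg hb, zero_smul]
      exact (matActLinear _ _ l).map_zero

lemma exists_cyclicRead_eq_of_intertwines {w w' : Fin d → Bool} {φ φ' : ℂ}
    (hφ : φ ≠ 0) (hφ' : φ' ≠ 0)
    (U : EuclideanSpace ℂ (Fin d) ≃ₗ[ℂ] EuclideanSpace ℂ (Fin d))
    (hUA : ∀ x, U (toEuclideanLin (Aw d w * Dmat d φ) x) =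
      toEuclideanLin (Aw d w' * Dmat d φ') (U x))
    (hUB : ∀ x, U (toEuclideanLin (Bw d w * Dmat d φ) x) =
      toEuclideanLin (Bw d w' * Dmat d φ') (U x))
    {l : List Bool} {j : Fin d} (hj : cyclicRead w j l.length = l) :
    ∃ j', cyclicRead w' j' l.length = l := by
  obtain ⟨c, hc, hc_iff⟩ := matAct_single w hφ l j
  have hne : matAct (Aw d w' * Dmat d φ') (Bw d w' * Dmat d φ') l
      (U (EuclideanSpace.single j 1)) ≠ 0 := by
    rw [← map_matAct U hUA hUB, hc]
    simpa using hc_iff.2 hj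
  obtain ⟨j', hj'⟩ := exists_matAct_single_ne_zero hne
  obtain ⟨c', hc', hc'_iff⟩ := matAct_single w' hφ' l j'
  refine ⟨j', hc'_iff.1 ?_⟩
  rintro rfl
  simp [hc'] at hj'

end Intertwining

theorem stmt14_general (d d' : ℕ) (hd : 0 < d)
    (w : Fin d → Bool) (w' : Fin d' → Bool)
    (φ φ' : ℂ) (hφ : ‖φ‖ = 1)
    (U : EuclideanSpace ℂ (Fin d) ≃ₗᵢ[ℂ] EuclideanSpace ℂ (Fin d'))
    (hUA : ∀ x, U (Matrix.toEuclideanLin (Aw d w * Dmat d φ) x) =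
      Matrix.toEuclideanLin (Aw d' w' * Dmat d' φ') (U x))
    (hUB : ∀ x, U (Matrix.toEuclideanLin (Bw d w * Dmat d φ) x) =
      Matrix.toEuclideanLin (Bw d' w' * Dmat d' φ') (U x)) :
    d = d' ∧ φ = φ' ∧
      ∃ u v : List Bool, List.ofFn w' = u ++ v ∧ List.ofFn w = v ++ u := by
  obtain rfl : d = d' := by simpa using U.toLinearEquiv.finrank_eq
  have : NeZero d := ⟨hd.ne'⟩
  obtain rfl : φ = φ' := phase_eq_of_intertwines U.toLinearEquiv hUA hUB
  have hφ0 : φ ≠ 0 := norm_ne_zero_iff.mp (hφ ▸ one_ne_zero)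
  have hw : cyclicRead w 0 (List.ofFn w).length = List.ofFn w := by
    simp [cyclicRead_eq_rotate]
  obtain ⟨j, hj⟩ := exists_cyclicRead_eq_of_intertwines hφ0 hφ0 U.toLinearEquiv hUA hUB hw
  rw [List.length_ofFn, cyclicRead_eq_rotate,
    List.rotate_eq_drop_append_take (by simp)] at hj
  exact ⟨rfl, rfl, _, _, (List.take_append_drop j _).symm, hj.symm⟩

theorem stmt14 (d d' : ℕ) (hd : 0 < d) (hd' : 0 < d')
    (w : Fin d → Bool) (w' : Fin d' → Bool)
    (hw : IsPrimeWord d w) (hw' : IsPrimeWord d' w')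
    (φ φ' : ℂ) (hφ : ‖φ‖ = 1) (hφ' : ‖φ'‖ = 1)
    (U : EuclideanSpace ℂ (Fin d) ≃ₗᵢ[ℂ] EuclideanSpace ℂ (Fin d'))
    (hUA : ∀ x, U (Matrix.toEuclideanLin (Aw d w * Dmat d φ) x) =
      Matrix.toEuclideanLin (Aw d' w' * Dmat d' φ') (U x))
    (hUB : ∀ x, U (Matrix.toEuclideanLin (Bw d w * Dmat d φ) x) =
      Matrix.toEuclideanLin (Bw d' w' * Dmat d' φ') (U x)) :
    d = d' ∧ φ = φ' ∧
      ∃ u v : List Bool, List.ofFn w' = u ++ v ∧ List.ofFn w = v ++ u :=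
  stmt14_general d d' hd w w' φ φ' hφ U hUA hUB
end
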